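/- With the face maps b_i^{n,p} as above, the map d_m^{n,p} = Σ_{i=0}^{n+1} (-1)^i b_i^{n,p} : Y^{n,p}(M,N) → Y^{n+1,p}(M,N) satisfies d_m^{n+1,p} ∘ d_m^{n,p} = 0 for all n, p ≥ 0. -/

import Mathlib

open TensorProduct
noncomputable section

namespace PS

variable (k : Type) [Field k] (A : Type) [Ring A] [Bialgebra k A]

/-- Left-nested tensor powers with base `B`: `pwr B n = B ⊗ A ⊗ ⋯ ⊗ A` (`n` copies of `A`). -/
def pwr (B : ModuleCat k) : ℕ → ModuleCat k
  | 0 => B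
  | n + 1 => ModuleCat.of k (pwr B n ⊗[k] A)

/-- `A^{⊗ n}` realized as `pwr k n`, i.e. `k ⊗ A ⊗ ⋯ ⊗ A`. -/
abbrev Pk (n : ℕ) : ModuleCat k := pwr k A (ModuleCat.of k k) n

abbrev μA : A ⊗[k] A →ₗ[k] A := LinearMap.mul' k A
abbrev ΔA : A →ₗ[k] A ⊗[k] A := Coalgebra.comul
abbrev εA : A →ₗ[k] k := Coalgebra.counit

/-- Multiplication of the tensorands in slots `i` and `i+1` (`1 ≤ i ≤ n`);
junk (zero map) for other `i`. -/
def mulP : (n : ℕ) → (i : ℕ) → ((Pk k A (n+1) : Type) →ₗ[k] Pk k A n)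
  | 0, _ => 0
  | n + 1, i =>
      if i = n + 1 then
        (TensorProduct.map (LinearMap.id : (Pk k A n : Type) →ₗ[k] Pk k A n) (μA k A)).comp
          (TensorProduct.assoc k (Pk k A n) A A).toLinearMap
      else
        TensorProduct.map (mulP n i) (LinearMap.id : A →ₗ[k] A)

/-- Insert an `A`-factor at the innermost slot (slot 1). -/
def insP : (n : ℕ) → (A ⊗[k] (Pk k A n : Type)) ≃ₗ[k] (Pk k A (n+1) : Type)
  | 0 => TensorProduct.comm k A k
  | n + 1 =>
      (TensorProduct.assoc k A (Pk k A n) A).symm.trans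
        (TensorProduct.congr (insP n) (LinearEquiv.refl k A))

section NM

variable {N : Type} [AddCommGroup N] [Module k N]

/-- The left diagonal action of `A` on `N ⊗ A^{⊗ p}` built from a base action `ωN`. -/
def ldiag (ωN : A ⊗[k] N →ₗ[k] N) :
    (p : ℕ) → (A ⊗[k] (pwr k A (ModuleCat.of k N) p : Type) →ₗ[k] pwr k A (ModuleCat.of k N) p)
  | 0 => ωN
  | p + 1 =>
      (TensorProduct.map (ldiag ωN p) (μA k A)).comp <|
        ((TensorProduct.tensorTensorTensorComm k A A
            (pwr k A (ModuleCat.of k N) p : Type) A).toLinearMap).comp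
          (TensorProduct.map (ΔA k A) (LinearMap.id :
            ((pwr k A (ModuleCat.of k N) p : Type) ⊗[k] A) →ₗ[k] _))

/-- Right diagonal multiplication on the `A`-slots of `N ⊗ A^{⊗ p}` (counit on the base). -/
def rdiagE : (p : ℕ) →
    ((pwr k A (ModuleCat.of k N) p : Type) ⊗[k] A →ₗ[k] pwr k A (ModuleCat.of k N) p)
  | 0 => (TensorProduct.rid k N).toLinearMap.comp
      (TensorProduct.map (LinearMap.id : N →ₗ[k] N) (εA k A))
  | p + 1 =>
      (TensorProduct.map (rdiagE p) (μA k A)).comp <|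
        ((TensorProduct.tensorTensorTensorComm k
            (pwr k A (ModuleCat.of k N) p : Type) A A A).toLinearMap).comp
          (TensorProduct.map
            (LinearMap.id : ((pwr k A (ModuleCat.of k N) p : Type) ⊗[k] A) →ₗ[k] _) (ΔA k A))

/-- Right diagonal action on `N ⊗ A^{⊗ p}` built from a base (right) action `ωNr`. -/
def rdiagAct (ωNr : N ⊗[k] A →ₗ[k] N) : (p : ℕ) →
    ((pwr k A (ModuleCat.of k N) p : Type) ⊗[k] A →ₗ[k] pwr k A (ModuleCat.of k N) p)
  | 0 => ωNr
  | p + 1 =>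
      (TensorProduct.map (rdiagAct ωNr p) (μA k A)).comp <|
        ((TensorProduct.tensorTensorTensorComm k
            (pwr k A (ModuleCat.of k N) p : Type) A A A).toLinearMap).comp
          (TensorProduct.map
            (LinearMap.id : ((pwr k A (ModuleCat.of k N) p : Type) ⊗[k] A) →ₗ[k] _) (ΔA k A))

end NM

/-- `dL : A^{⊗ n} → A ⊗ A^{⊗ n}`, `a^1 ⊗ ⋯ ⊗ a^n ↦ Σ (a^1)_1 ⋯ (a^n)_1 ⊗ ((a^1)_2 ⊗ ⋯ ⊗ (a^n)_2)`. -/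
def dL : (n : ℕ) → ((Pk k A n : Type) →ₗ[k] A ⊗[k] (Pk k A n : Type))
  | 0 => (TensorProduct.map (Algebra.linearMap k A) (LinearMap.id : k →ₗ[k] k)).comp
      (TensorProduct.lid k k).symm.toLinearMap
  | n + 1 =>
      (TensorProduct.map (μA k A)
          (LinearMap.id : ((Pk k A n : Type) ⊗[k] A) →ₗ[k] _)).comp <|
        ((TensorProduct.tensorTensorTensorComm k A (Pk k A n : Type) A A).toLinearMap).comp
          (TensorProduct.map (dL n) (ΔA k A))

/-- `dR : A^{⊗ n} → A^{⊗ n} ⊗ A`, `a^1 ⊗ ⋯ ⊗ a^n ↦ Σ ((a^1)_1 ⊗ ⋯ ⊗ (a^n)_1) ⊗ (a^1)_2 ⋯ (a^n)_2`. -/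
def dR : (n : ℕ) → ((Pk k A n : Type) →ₗ[k] (Pk k A n : Type) ⊗[k] A)
  | 0 => (TensorProduct.map (LinearMap.id : k →ₗ[k] k) (Algebra.linearMap k A)).comp
      (TensorProduct.rid k k).symm.toLinearMap
  | n + 1 =>
      (TensorProduct.map
          (LinearMap.id : ((Pk k A n : Type) ⊗[k] A) →ₗ[k] _) (μA k A)).comp <|
        ((TensorProduct.tensorTensorTensorComm k (Pk k A n : Type) A A A).toLinearMap).comp
          (TensorProduct.map (dR n) (ΔA k A))

section Base

variable {N : Type} [AddCommGroup N] [Module k N]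

/-- Apply `ρN : N → N ⊗ A` to the base of `N ⊗ A^{⊗ p}`. -/
def rhoBase (ρN : N →ₗ[k] N ⊗[k] A) : (p : ℕ) →
    ((pwr k A (ModuleCat.of k N) p : Type) →ₗ[k] pwr k A (ModuleCat.of k (N ⊗[k] A)) p)
  | 0 => ρN
  | p + 1 => TensorProduct.map (rhoBase ρN p) (LinearMap.id : A →ₗ[k] A)

/-- Reinterpret `(N ⊗ A) ⊗ A^{⊗ p}` as `N ⊗ A^{⊗ (p+1)}`. -/
def shiftB : (p : ℕ) →
    ((pwr k A (ModuleCat.of k (N ⊗[k] A)) p : Type) ≃ₗ[k] pwr k A (ModuleCat.of k N) (p+1))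
  | 0 => LinearEquiv.refl k (N ⊗[k] A)
  | p + 1 => TensorProduct.congr (shiftB p) (LinearEquiv.refl k A)

/-- Multiply the `A`-component of the base `N ⊗ A` on the right by an element of `A`. -/
def rmulBase : (p : ℕ) →
    ((pwr k A (ModuleCat.of k (N ⊗[k] A)) p : Type) ⊗[k] A →ₗ[k]
      pwr k A (ModuleCat.of k (N ⊗[k] A)) p)
  | 0 => (TensorProduct.map (LinearMap.id : N →ₗ[k] N) (μA k A)).comp
      (TensorProduct.assoc k N A A).toLinearMap
  | p + 1 =>
      (TensorProduct.map (rmulBase p) (LinearMap.id : A →ₗ[k] A)).comp <|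
        ((TensorProduct.assoc k (pwr k A (ModuleCat.of k (N ⊗[k] A)) p : Type) A A).symm.toLinearMap).comp <|
          (TensorProduct.map
            (LinearMap.id : (pwr k A (ModuleCat.of k (N ⊗[k] A)) p : Type) →ₗ[k] _)
            (TensorProduct.comm k A A).toLinearMap).comp
            (TensorProduct.assoc k
              (pwr k A (ModuleCat.of k (N ⊗[k] A)) p : Type) A A).toLinearMap

/-- Apply the counit to the `A`-component of the base `N ⊗ A`. -/
def epsBase : (p : ℕ) →
    ((pwr k A (ModuleCat.of k (N ⊗[k] A)) p : Type) →ₗ[k] pwr k A (ModuleCat.of k N) p)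
  | 0 => (TensorProduct.rid k N).toLinearMap.comp
      (TensorProduct.map (LinearMap.id : N →ₗ[k] N) (εA k A))
  | p + 1 => TensorProduct.map (epsBase p) (LinearMap.id : A →ₗ[k] A)

/-- Apply `Δ` on the `i`-th `A`-slot (`1 ≤ i ≤ p`) of `N ⊗ A^{⊗ p}`; junk otherwise. -/
def comulAt : (p : ℕ) → (i : ℕ) →
    ((pwr k A (ModuleCat.of k N) p : Type) →ₗ[k] pwr k A (ModuleCat.of k N) (p+1))
  | 0, _ => 0
  | p + 1, i =>
      if i = p + 1 then
        ((TensorProduct.assoc k (pwr k A (ModuleCat.of k N) p : Type) A A).symm.toLinearMap).comp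
          (TensorProduct.map
            (LinearMap.id : (pwr k A (ModuleCat.of k N) p : Type) →ₗ[k] _) (ΔA k A))
      else
        TensorProduct.map (comulAt p i) (LinearMap.id : A →ₗ[k] A)

/-- Left coaction on `N ⊗ A^{⊗ p}` coming from a left coaction on the base. -/
def lcoBase (ρNl : N →ₗ[k] A ⊗[k] N) : (p : ℕ) →
    ((pwr k A (ModuleCat.of k N) p : Type) →ₗ[k]
      A ⊗[k] (pwr k A (ModuleCat.of k N) p : Type))
  | 0 => ρNl
  | p + 1 =>
      ((TensorProduct.assoc k A (pwr k A (ModuleCat.of k N) p : Type) A).toLinearMap).comp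
        (TensorProduct.map (lcoBase ρNl p) (LinearMap.id : A →ₗ[k] A))

end Base

section Bicomplex

variable {M N : Type} [AddCommGroup M] [Module k M] [AddCommGroup N] [Module k N]

/-- `A^{⊗ n} ⊗ M`, the domain of the `(n,p)` cochains. -/
abbrev Dm (M : Type) [AddCommGroup M] [Module k M] (n : ℕ) : Type :=
  (Pk k A n : Type) ⊗[k] M

/-- `N ⊗ A^{⊗ p}`. -/
abbrev Cd (N : Type) [AddCommGroup N] [Module k N] (p : ℕ) : Type :=
  (pwr k A (ModuleCat.of k N) p : Type)

/-- The space of `(n,p)` cochains `Hom(A^{⊗ n} ⊗ M, N ⊗ A^{⊗ p})`. -/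
abbrev Yc (M N : Type) [AddCommGroup M] [Module k M] [AddCommGroup N] [Module k N]
    (n p : ℕ) : Type := Dm k A M n →ₗ[k] Cd k A N p

variable (ωM : A ⊗[k] M →ₗ[k] M) (ρM : M →ₗ[k] M ⊗[k] A)
variable (ωN : A ⊗[k] N →ₗ[k] N) (ρN : N →ₗ[k] N ⊗[k] A)

/-- `b_0`: the face using the diagonal left action of `a^1` on `N ⊗ A^{⊗ p}`. -/
def face0 (n p : ℕ) (f : Yc k A M N n p) : Yc k A M N (n+1) p :=
  (ldiag k A ωN p).comp <|
    (TensorProduct.map (LinearMap.id : A →ₗ[k] A) f).comp <|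
      ((TensorProduct.assoc k A (Pk k A n : Type) M).toLinearMap).comp
        (TensorProduct.map (insP k A n).symm.toLinearMap (LinearMap.id : M →ₗ[k] M))

/-- `b_i`, `1 ≤ i ≤ n`: multiply the adjacent arguments `a^i a^{i+1}`. -/
def faceMid (n p : ℕ) (i : ℕ) (f : Yc k A M N n p) : Yc k A M N (n+1) p :=
  f.comp (TensorProduct.map (mulP k A n i) (LinearMap.id : M →ₗ[k] M))

/-- `b_{n+1}` in the Hopf-module case: `f(a^1 ⊗ ⋯ ⊗ a^n ⊗ a^{n+1}·m)`. -/
def faceLastH (n p : ℕ) (f : Yc k A M N n p) : Yc k A M N (n+1) p :=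
  f.comp <|
    (TensorProduct.map (LinearMap.id : (Pk k A n : Type) →ₗ[k] _) ωM).comp
      (TensorProduct.assoc k (Pk k A n : Type) A M).toLinearMap

/-- `b_{n+1}` in the Yetter-Drinfel'd case. -/
def faceLastYD (n p : ℕ) (f : Yc k A M N n p) : Yc k A M N (n+1) p :=
  (rdiagE k A p).comp <|
    ((TensorProduct.comm k A (Cd k A N p)).toLinearMap).comp <|
      (TensorProduct.map (LinearMap.id : A →ₗ[k] A)
        (f.comp (TensorProduct.map (LinearMap.id : (Pk k A n : Type) →ₗ[k] _) ωM))).comp <|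
        ((TensorProduct.leftComm k (Pk k A n : Type) A (A ⊗[k] M)).toLinearMap).comp <|
          (TensorProduct.map (LinearMap.id : (Pk k A n : Type) →ₗ[k] _)
            (TensorProduct.assoc k A A M).toLinearMap).comp <|
            ((TensorProduct.assoc k (Pk k A n : Type) (A ⊗[k] A) M).toLinearMap).comp
              (TensorProduct.map
                (TensorProduct.map (LinearMap.id : (Pk k A n : Type) →ₗ[k] _) (ΔA k A))
                (LinearMap.id : M →ₗ[k] M))

/-- The Yetter-Drinfel'd horizontal faces `b_i^{n,p}`, `0 ≤ i ≤ n+1`. -/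
def bYD (n p : ℕ) (i : ℕ) (f : Yc k A M N n p) : Yc k A M N (n+1) p :=
  if i = 0 then face0 k A ωN n p f
  else if i ≤ n then faceMid k A n p i f
  else faceLastYD k A ωM n p f

/-- The Hopf-module horizontal faces `b_i^{n,p}`, `0 ≤ i ≤ n+1`. -/
def bH (n p : ℕ) (i : ℕ) (f : Yc k A M N n p) : Yc k A M N (n+1) p :=
  if i = 0 then face0 k A ωN n p f
  else if i ≤ n then faceMid k A n p i f
  else faceLastH k A ωM n p f

/-- `c_0` in the Hopf-module case: apply `ρ_N` to the `N`-component of the output. -/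
def cof0H (n p : ℕ) (f : Yc k A M N n p) : Yc k A M N n (p+1) :=
  ((shiftB k A p).toLinearMap).comp ((rhoBase k A ρN p).comp f)

/-- `c_0` in the Yetter-Drinfel'd case. -/
def cof0YD (n p : ℕ) (f : Yc k A M N n p) : Yc k A M N n (p+1) :=
  ((shiftB k A p).toLinearMap).comp <|
    (rmulBase k A p).comp <|
      ((TensorProduct.comm k A
          (pwr k A (ModuleCat.of k (N ⊗[k] A)) p : Type)).toLinearMap).comp <|
        (TensorProduct.map (LinearMap.id : A →ₗ[k] A) ((rhoBase k A ρN p).comp f)).comp <|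
          ((TensorProduct.assoc k A (Pk k A n : Type) M).toLinearMap).comp
            (TensorProduct.map (dL k A n) (LinearMap.id : M →ₗ[k] M))

/-- `c_{p+1}`: uses the right comodule structure of `M`. -/
def cofLast (n p : ℕ) (f : Yc k A M N n p) : Yc k A M N n (p+1) :=
  (TensorProduct.map f (μA k A)).comp <|
    ((TensorProduct.tensorTensorTensorComm k (Pk k A n : Type) A M A).toLinearMap).comp
      (TensorProduct.map (dR k A n) ρM)

/-- The Yetter-Drinfel'd vertical cofaces `c_j^{n,p}`, `0 ≤ j ≤ p+1`. -/
def cYD (n p : ℕ) (j : ℕ) (f : Yc k A M N n p) : Yc k A M N n (p+1) :=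
  if j = 0 then cof0YD k A ρN n p f
  else if j ≤ p then (comulAt k A p j).comp f
  else cofLast k A ρM n p f

/-- The Hopf-module vertical cofaces `c_j^{n,p}`, `0 ≤ j ≤ p+1`. -/
def cH (n p : ℕ) (j : ℕ) (f : Yc k A M N n p) : Yc k A M N n (p+1) :=
  if j = 0 then cof0H k A ρN n p f
  else if j ≤ p then (comulAt k A p j).comp f
  else cofLast k A ρM n p f

/-- The horizontal differential (Yetter-Drinfel'd case). -/
def dmYD (n p : ℕ) (f : Yc k A M N n p) : Yc k A M N (n+1) p :=
  ∑ i ∈ Finset.range (n+2), ((-1 : ℤ)^i) • bYD k A ωM ωN n p i f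

/-- The vertical differential (Yetter-Drinfel'd case). -/
def dcYD (n p : ℕ) (f : Yc k A M N n p) : Yc k A M N n (p+1) :=
  ∑ j ∈ Finset.range (p+2), ((-1 : ℤ)^j) • cYD k A ρM ρN n p j f

/-- The horizontal differential (Hopf-module case). -/
def dmH (n p : ℕ) (f : Yc k A M N n p) : Yc k A M N (n+1) p :=
  ∑ i ∈ Finset.range (n+2), ((-1 : ℤ)^i) • bH k A ωM ωN n p i f

/-- The vertical differential (Hopf-module case). -/
def dcH (n p : ℕ) (f : Yc k A M N n p) : Yc k A M N n (p+1) :=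
  ∑ j ∈ Finset.range (p+2), ((-1 : ℤ)^j) • cH k A ρM ρN n p j f

end Bicomplex

section Structures

variable {M : Type} [AddCommGroup M] [Module k M]

/-- `(M, ωM)` is a left `A`-module. -/
def IsModule (ωM : A ⊗[k] M →ₗ[k] M) : Prop :=
  (∀ m : M, ωM ((1 : A) ⊗ₜ m) = m) ∧
  ∀ (a b : A) (m : M), ωM (a ⊗ₜ ωM (b ⊗ₜ m)) = ωM ((a * b) ⊗ₜ m)

/-- `(M, ρM)` is a right `A`-comodule. -/
def IsComodule (ρM : M →ₗ[k] M ⊗[k] A) : Prop :=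
  ((TensorProduct.rid k M).toLinearMap.comp
      ((TensorProduct.map (LinearMap.id : M →ₗ[k] M) (εA k A)).comp ρM) = LinearMap.id) ∧
  (TensorProduct.map ρM (LinearMap.id : A →ₗ[k] A)).comp ρM =
    ((TensorProduct.assoc k M A A).symm.toLinearMap).comp
      ((TensorProduct.map (LinearMap.id : M →ₗ[k] M) (ΔA k A)).comp ρM)

/-- The map `a ⊗ m ↦ Σ a_1·m_0 ⊗ a_2 m_1`. -/
def hopfRHS (ωM : A ⊗[k] M →ₗ[k] M) (ρM : M →ₗ[k] M ⊗[k] A) :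
    A ⊗[k] M →ₗ[k] M ⊗[k] A :=
  (TensorProduct.map ωM (μA k A)).comp <|
    ((TensorProduct.tensorTensorTensorComm k A A M A).toLinearMap).comp
      (TensorProduct.map (ΔA k A) ρM)

/-- The map `a ⊗ m ↦ Σ (a_2·m)_0 ⊗ (a_2·m)_1 a_1`. -/
def ydLHS (ωM : A ⊗[k] M →ₗ[k] M) (ρM : M →ₗ[k] M ⊗[k] A) :
    A ⊗[k] M →ₗ[k] M ⊗[k] A :=
  (TensorProduct.map (LinearMap.id : M →ₗ[k] M) (μA k A)).comp <|
    ((TensorProduct.assoc k M A A).toLinearMap).comp <|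
      ((TensorProduct.comm k A (M ⊗[k] A)).toLinearMap).comp <|
        (TensorProduct.map (LinearMap.id : A →ₗ[k] A) (ρM.comp ωM)).comp <|
          ((TensorProduct.assoc k A A M).toLinearMap).comp
            (TensorProduct.map (ΔA k A) (LinearMap.id : M →ₗ[k] M))

/-- `(M, ωM, ρM)` is a left-right Yetter-Drinfel'd module over `A`. -/
def IsYetterDrinfeld (ωM : A ⊗[k] M →ₗ[k] M) (ρM : M →ₗ[k] M ⊗[k] A) : Prop :=
  IsModule k A ωM ∧ IsComodule k A ρM ∧
    ydLHS k A ωM ρM = hopfRHS k A ωM ρM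

/-- `(M, ωM, ρM)` is a left-right Hopf module over `A`. -/
def IsHopfModule (ωM : A ⊗[k] M →ₗ[k] M) (ρM : M →ₗ[k] M ⊗[k] A) : Prop :=
  IsModule k A ωM ∧ IsComodule k A ρM ∧
    ρM.comp ωM = hopfRHS k A ωM ρM

end Structures


/-
The faces satisfy the cosimplicial identities `b_i ∘ b_j = b_{j+1} ∘ b_i` for `i ≤ j`, so the
terms of the double sum in `d_m ∘ d_m` cancel in pairs `(i, j) ↔ (j + 1, i)`. Between middle
faces the identities are associativity of `A`. The others reduce, via multiplicativity of `Δ`, to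
associativity of the actions on `M` and `N` and to three facts about `N ⊗ A^{⊗ p}`: the diagonal
left action of `A` and the diagonal right multiplication are associative, and they commute.
Each of these is inherited by the tensor product of two actions of the relevant kind, hence
follows by induction on `p`.
-/

theorem sum_alternating_comp_eq_zero {V W X : Type*} [AddCommGroup W] [AddCommGroup X]
    (n : ℕ) (δ : ℕ → V → W) (δ' : ℕ → W →+ X)
    (h : ∀ i j, i ≤ j → j ≤ n + 1 → ∀ v, δ' i (δ j v) = δ' (j + 1) (δ i v)) (v : V) :
    ∑ i ∈ Finset.range (n + 3), (-1 : ℤ) ^ i • δ' i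
      (∑ j ∈ Finset.range (n + 2), (-1 : ℤ) ^ j • δ j v) = 0 := by
  have cancel : ∀ i j (x : X),
      (-1 : ℤ) ^ i • (-1 : ℤ) ^ j • x + (-1 : ℤ) ^ (j + 1) • (-1 : ℤ) ^ i • x = 0 := by
    intro i j x
    rw [smul_comm, pow_succ, mul_neg_one, neg_smul, add_neg_cancel]
  simp only [map_sum, map_zsmul, Finset.smul_sum]
  rw [← Finset.sum_product']
  refine Finset.sum_involution
    (fun q _ => if q.1 ≤ q.2 then (q.2 + 1, q.1) else (q.2, q.1 - 1)) ?_ ?_ ?_ ?_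
  · rintro ⟨i, j⟩ hq
    simp only [Finset.mem_product, Finset.mem_range] at hq
    split_ifs with hij
    · rw [h i j hij (by omega)]
      exact cancel i j _
    · obtain ⟨i, rfl⟩ : ∃ m, i = m + 1 := ⟨i - 1, by omega⟩
      rw [Nat.add_sub_cancel, ← h j i (by omega) (by omega), add_comm]
      exact cancel j i _
  · rintro ⟨i, j⟩ _ _
    split_ifs <;> simp <;> omega
  · rintro ⟨i, j⟩ hq
    simp only [Finset.mem_product, Finset.mem_range] at hq ⊢
    split_ifs <;> omega
  · rintro ⟨i, j⟩ _
    split_ifs <;> simp <;> omega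

section TensorAction

variable {R R' S S' V W : Type*} [Semiring R] [Algebra k R] [Semiring R'] [Algebra k R']
  [Semiring S] [Algebra k S] [Semiring S'] [Algebra k S']
  [AddCommMonoid V] [Module k V] [AddCommMonoid W] [Module k W]

/-- `ldiag (p+1)` is, by definition, `tensorAct (ldiag p) μ` precomposed with `Δ ⊗ id`;
likewise `rdiagE (p+1)` is `tensorRAct (rdiagE p) μ` precomposed with `id ⊗ Δ`. -/
def tensorAct (ωV : R ⊗[k] V →ₗ[k] V) (ωW : S ⊗[k] W →ₗ[k] W) :
    (R ⊗[k] S) ⊗[k] (V ⊗[k] W) →ₗ[k] V ⊗[k] W :=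
  TensorProduct.map ωV ωW ∘ₗ (TensorProduct.tensorTensorTensorComm k R S V W).toLinearMap

def tensorRAct (ωV : V ⊗[k] R →ₗ[k] V) (ωW : W ⊗[k] S →ₗ[k] W) :
    (V ⊗[k] W) ⊗[k] (R ⊗[k] S) →ₗ[k] V ⊗[k] W :=
  TensorProduct.map ωV ωW ∘ₗ (TensorProduct.tensorTensorTensorComm k V W R S).toLinearMap

@[simp]
lemma tensorAct_tmul (ωV : R ⊗[k] V →ₗ[k] V) (ωW : S ⊗[k] W →ₗ[k] W)
    (r : R) (s : S) (v : V) (w : W) :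
    tensorAct k ωV ωW ((r ⊗ₜ s) ⊗ₜ (v ⊗ₜ w)) = ωV (r ⊗ₜ v) ⊗ₜ ωW (s ⊗ₜ w) := rfl

@[simp]
lemma tensorRAct_tmul (ωV : V ⊗[k] R →ₗ[k] V) (ωW : W ⊗[k] S →ₗ[k] W)
    (r : R) (s : S) (v : V) (w : W) :
    tensorRAct k ωV ωW ((v ⊗ₜ w) ⊗ₜ (r ⊗ₜ s)) = ωV (v ⊗ₜ r) ⊗ₜ ωW (w ⊗ₜ s) := rfl

lemma tensorAct_assoc {ωV : R ⊗[k] V →ₗ[k] V} {ωW : S ⊗[k] W →ₗ[k] W}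
    (hV : ∀ a b v, ωV (a ⊗ₜ ωV (b ⊗ₜ v)) = ωV ((a * b) ⊗ₜ v))
    (hW : ∀ a b w, ωW (a ⊗ₜ ωW (b ⊗ₜ w)) = ωW ((a * b) ⊗ₜ w))
    (u u' : R ⊗[k] S) (x : V ⊗[k] W) :
    tensorAct k ωV ωW (u ⊗ₜ tensorAct k ωV ωW (u' ⊗ₜ x)) =
      tensorAct k ωV ωW ((u * u') ⊗ₜ x) := by
  induction x using TensorProduct.induction_on with
  | zero => simp
  | add x y hx hy => simp only [tmul_add, map_add, hx, hy]
  | tmul v w =>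
    induction u using TensorProduct.induction_on with
    | zero => simp
    | add u₁ u₂ h₁ h₂ => simp only [add_mul, add_tmul, map_add, h₁, h₂]
    | tmul r s =>
      induction u' using TensorProduct.induction_on with
      | zero => simp
      | add u₁ u₂ h₁ h₂ => simp only [mul_add, add_tmul, tmul_add, map_add, h₁, h₂]
      | tmul r' s' => simp [hV, hW]

lemma tensorRAct_assoc {ωV : V ⊗[k] R →ₗ[k] V} {ωW : W ⊗[k] S →ₗ[k] W}
    (hV : ∀ v a b, ωV (ωV (v ⊗ₜ a) ⊗ₜ b) = ωV (v ⊗ₜ (a * b)))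
    (hW : ∀ w a b, ωW (ωW (w ⊗ₜ a) ⊗ₜ b) = ωW (w ⊗ₜ (a * b)))
    (x : V ⊗[k] W) (u u' : R ⊗[k] S) :
    tensorRAct k ωV ωW (tensorRAct k ωV ωW (x ⊗ₜ u) ⊗ₜ u') =
      tensorRAct k ωV ωW (x ⊗ₜ (u * u')) := by
  induction x using TensorProduct.induction_on with
  | zero => simp
  | add x y hx hy => simp only [add_tmul, map_add, hx, hy]
  | tmul v w =>
    induction u using TensorProduct.induction_on with
    | zero => simp
    | add u₁ u₂ h₁ h₂ => simp only [add_mul, add_tmul, tmul_add, map_add, h₁, h₂]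
    | tmul r s =>
      induction u' using TensorProduct.induction_on with
      | zero => simp
      | add u₁ u₂ h₁ h₂ => simp only [mul_add, tmul_add, map_add, h₁, h₂]
      | tmul r' s' => simp [hV, hW]

lemma tensorRAct_tensorAct {ωV : R ⊗[k] V →ₗ[k] V} {ωW : R' ⊗[k] W →ₗ[k] W}
    {ωV' : V ⊗[k] S →ₗ[k] V} {ωW' : W ⊗[k] S' →ₗ[k] W}
    (hV : ∀ a v b, ωV' (ωV (a ⊗ₜ v) ⊗ₜ b) = ωV (a ⊗ₜ ωV' (v ⊗ₜ b)))
    (hW : ∀ a w b, ωW' (ωW (a ⊗ₜ w) ⊗ₜ b) = ωW (a ⊗ₜ ωW' (w ⊗ₜ b)))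
    (u : R ⊗[k] R') (x : V ⊗[k] W) (u' : S ⊗[k] S') :
    tensorRAct k ωV' ωW' (tensorAct k ωV ωW (u ⊗ₜ x) ⊗ₜ u') =
      tensorAct k ωV ωW (u ⊗ₜ tensorRAct k ωV' ωW' (x ⊗ₜ u')) := by
  induction x using TensorProduct.induction_on with
  | zero => simp
  | add x y hx hy => simp only [add_tmul, tmul_add, map_add, hx, hy]
  | tmul v w =>
    induction u using TensorProduct.induction_on with
    | zero => simp
    | add u₁ u₂ h₁ h₂ => simp only [add_tmul, map_add, h₁, h₂]
    | tmul r s =>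
      induction u' using TensorProduct.induction_on with
      | zero => simp
      | add u₁ u₂ h₁ h₂ => simp only [tmul_add, map_add, h₁, h₂]
      | tmul r' s' => simp [hV, hW]

end TensorAction

section Diagonal

variable {N : Type} [AddCommGroup N] [Module k N]

lemma ldiag_assoc {ωN : A ⊗[k] N →ₗ[k] N}
    (hN : ∀ (a b : A) (x : N), ωN (a ⊗ₜ ωN (b ⊗ₜ x)) = ωN ((a * b) ⊗ₜ x))
    (p : ℕ) (a b : A) (z : (pwr k A (ModuleCat.of k N) p : Type)) :
    ldiag k A ωN p (a ⊗ₜ ldiag k A ωN p (b ⊗ₜ z)) = ldiag k A ωN p ((a * b) ⊗ₜ z) := by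
  induction p generalizing a b with
  | zero => exact hN a b z
  | succ p ih =>
    have h := tensorAct_assoc k (ωW := μA k A) ih (fun a b c => by simp [mul_assoc])
      (ΔA k A a) (ΔA k A b) z
    rwa [← Bialgebra.comul_mul] at h

lemma rdiagE_assoc (p : ℕ) (z : (pwr k A (ModuleCat.of k N) p : Type)) (a b : A) :
    rdiagE k A p (rdiagE k A p (z ⊗ₜ a) ⊗ₜ b) = rdiagE k A p (z ⊗ₜ (a * b)) := by
  induction p generalizing a b with
  | zero =>
    change εA k A b • εA k A a • z = εA k A (a * b) • z
    rw [smul_smul, Bialgebra.counit_mul, mul_comm]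
  | succ p ih =>
    have h := tensorRAct_assoc k (ωW := μA k A) ih (fun a b c => by simp [mul_assoc])
      z (ΔA k A a) (ΔA k A b)
    rwa [← Bialgebra.comul_mul] at h

lemma rdiagE_ldiag (ωN : A ⊗[k] N →ₗ[k] N) (p : ℕ) (a : A)
    (z : (pwr k A (ModuleCat.of k N) p : Type)) (b : A) :
    rdiagE k A p (ldiag k A ωN p (a ⊗ₜ z) ⊗ₜ b) =
      ldiag k A ωN p (a ⊗ₜ rdiagE k A p (z ⊗ₜ b)) := by
  induction p generalizing a b with
  | zero => exact ((congrArg ωN (tmul_smul _ a (show N from z))).trans (map_smul ωN _ _)).symm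
  | succ p ih =>
    exact tensorRAct_tensorAct k (ωW := μA k A) (ωW' := μA k A) ih
      (fun a c b => by simp [mul_assoc]) _ _ _

end Diagonal

section TensorPowers

section Induction

variable {k A} {B : ModuleCat k} {n : ℕ}

theorem pwr_induction_on {motive : (pwr k A B (n+1) : Type) → Prop}
    (x : (pwr k A B (n+1) : Type)) (zero : motive 0)
    (tmul : ∀ (y : (pwr k A B n : Type)) (a : A), motive (y ⊗ₜ a))
    (add : ∀ x y, motive x → motive y → motive (x + y)) : motive x :=
  TensorProduct.induction_on (M := (pwr k A B n : Type)) (N := A) x zero tmul add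

theorem pwr_induction_on₂ {motive : (pwr k A B (n+2) : Type) → Prop}
    (x : (pwr k A B (n+2) : Type)) (zero : motive 0)
    (tmul : ∀ (y : (pwr k A B n : Type)) (a b : A),
      motive (TensorProduct.tmul k (M := (pwr k A B (n+1) : Type)) (y ⊗ₜ a) b))
    (add : ∀ x y, motive x → motive y → motive (x + y)) : motive x := by
  induction x using pwr_induction_on with
  | zero => exact zero
  | add x y hx hy => exact add x y hx hy
  | tmul Y b =>
    induction Y using pwr_induction_on with
    | zero => rw [zero_tmul]; exact zero
    | add y z hy hz => rw [add_tmul]; exact add _ _ hy hz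
    | tmul y a => exact tmul y a b

theorem pwr_induction_on₃ {motive : (pwr k A B (n+3) : Type) → Prop}
    (x : (pwr k A B (n+3) : Type)) (zero : motive 0)
    (tmul : ∀ (y : (pwr k A B n : Type)) (a b c : A),
      motive (TensorProduct.tmul k (M := (pwr k A B (n+2) : Type))
        (TensorProduct.tmul k (M := (pwr k A B (n+1) : Type)) (y ⊗ₜ a) b) c))
    (add : ∀ x y, motive x → motive y → motive (x + y)) : motive x := by
  induction x using pwr_induction_on with
  | zero => exact zero
  | add x y hx hy => exact add x y hx hy
  | tmul Y c =>
    induction Y using pwr_induction_on₂ with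
    | zero => rw [zero_tmul]; exact zero
    | add y z hy hz => rw [add_tmul]; exact add _ _ hy hz
    | tmul y a b => exact tmul y a b c

end Induction

lemma mulP_last_tmul (n : ℕ) (x : (Pk k A n : Type)) (a b : A) :
    mulP k A (n+1) (n+1) ((x ⊗ₜ a) ⊗ₜ b) = x ⊗ₜ (a * b) := by
  simp only [mulP, ↓reduceIte]; rfl

lemma mulP_tmul_of_ne (n i : ℕ) (h : i ≠ n + 1) (x : (Pk k A (n+1) : Type)) (a : A) :
    mulP k A (n+1) i (x ⊗ₜ a) = mulP k A n i x ⊗ₜ a := by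
  simp only [mulP, h, ↓reduceIte]; rfl

lemma insP_succ_tmul (n : ℕ) (a b : A) (x : (Pk k A n : Type)) :
    insP k A (n+1) (a ⊗ₜ (x ⊗ₜ b)) = insP k A n (a ⊗ₜ x) ⊗ₜ b := rfl

lemma mulP_one_insP_insP (n : ℕ) (a b : A) (x : (Pk k A n : Type)) :
    mulP k A (n+1) 1 (insP k A (n+1) (a ⊗ₜ insP k A n (b ⊗ₜ x))) =
      insP k A n ((a * b) ⊗ₜ x) := by
  induction n with
  | zero => exact mulP_last_tmul k A 0 x a b
  | succ n ih =>
    induction x using pwr_induction_on with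
    | zero => simp
    | add y z hy hz => simp only [tmul_add, map_add, hy, hz]
    | tmul y c =>
      rw [insP_succ_tmul, insP_succ_tmul, insP_succ_tmul,
        mulP_tmul_of_ne k A (n+1) 1 (by omega), ih]

lemma mulP_succ_insP (n i : ℕ) (h1 : 1 ≤ i) (h2 : i ≤ n) (a : A) (X : (Pk k A (n+1) : Type)) :
    mulP k A (n+1) (i+1) (insP k A (n+1) (a ⊗ₜ X)) = insP k A n (a ⊗ₜ mulP k A n i X) := by
  induction n generalizing i with
  | zero => omega
  | succ n ih =>
    rcases Nat.lt_or_ge i (n+1) with hi | hi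
    · induction X using pwr_induction_on with
      | zero => simp
      | add y z hy hz => simp only [tmul_add, map_add, hy, hz]
      | tmul Y b =>
        rw [insP_succ_tmul, mulP_tmul_of_ne k A (n+1) (i+1) (by omega), ih i h1 (by omega),
          mulP_tmul_of_ne k A n i (by omega), insP_succ_tmul]
    · obtain rfl : i = n + 1 := by omega
      induction X using pwr_induction_on₂ with
      | zero => simp
      | add y z hy hz => simp only [tmul_add, map_add, hy, hz]
      | tmul y c b =>
        erw [insP_succ_tmul, insP_succ_tmul, mulP_last_tmul, mulP_last_tmul, insP_succ_tmul]

lemma mulP_mulP (n i j : ℕ) (h1 : 1 ≤ i) (h2 : i ≤ j) (h3 : j ≤ n)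
    (X : (Pk k A (n+2) : Type)) :
    mulP k A n j (mulP k A (n+1) i X) = mulP k A n i (mulP k A (n+1) (j+1) X) := by
  induction n generalizing i j with
  | zero => omega
  | succ n ih =>
    rcases Nat.lt_or_ge j (n+1) with hj | hj
    · induction X using pwr_induction_on with
      | zero => simp
      | add y z hy hz => simp only [map_add, hy, hz]
      | tmul W c =>
        rw [mulP_tmul_of_ne k A (n+1) i (by omega), mulP_tmul_of_ne k A n j (by omega),
          mulP_tmul_of_ne k A (n+1) (j+1) (by omega), mulP_tmul_of_ne k A n i (by omega),
          ih i j h1 h2 (by omega)]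
    obtain rfl : j = n + 1 := by omega
    rcases Nat.lt_or_ge i (n+1) with hi | hi
    · induction X using pwr_induction_on₂ with
      | zero => simp
      | add y z hy hz => simp only [map_add, hy, hz]
      | tmul V b c =>
        erw [mulP_tmul_of_ne k A (n+1) i (by omega), mulP_tmul_of_ne k A n i (by omega),
          mulP_last_tmul, mulP_last_tmul, mulP_tmul_of_ne k A n i (by omega)]
    · obtain rfl : i = n + 1 := by omega
      induction X using pwr_induction_on₃ with
      | zero => simp
      | add y z hy hz => simp only [map_add, hy, hz]
      | tmul y a b c =>
        erw [mulP_tmul_of_ne k A (n+1) (n+1) (by omega), mulP_last_tmul, mulP_last_tmul,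
          mulP_last_tmul, mulP_last_tmul, mul_assoc]

end TensorPowers

section Faces

variable {M N : Type} [AddCommGroup M] [Module k M] [AddCommGroup N] [Module k N]

lemma ext_insP {n : ℕ} {C : Type} [AddCommGroup C] [Module k C]
    {g h : ((Pk k A (n+1) : Type) ⊗[k] M) →ₗ[k] C}
    (H : ∀ (a : A) (x : (Pk k A n : Type)) (m : M),
      g (insP k A n (a ⊗ₜ x) ⊗ₜ m) = h (insP k A n (a ⊗ₜ x) ⊗ₜ m)) : g = h := by
  have hsurj : Function.Surjective
      (TensorProduct.map (insP k A n).toLinearMap (LinearMap.id : M →ₗ[k] M)) :=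
    (TensorProduct.congr (insP k A n) (LinearEquiv.refl k M)).surjective
  refine (LinearMap.cancel_right hsurj).mp (TensorProduct.ext_threefold fun a x m => ?_)
  simpa using H a x m

lemma face0_insP_tmul (ωN : A ⊗[k] N →ₗ[k] N) (n p : ℕ) (f : Yc k A M N n p)
    (a : A) (x : (Pk k A n : Type)) (m : M) :
    face0 k A ωN n p f (insP k A n (a ⊗ₜ x) ⊗ₜ m) = ldiag k A ωN p (a ⊗ₜ f (x ⊗ₜ m)) := by
  simp [face0]

lemma faceMid_tmul (n p i : ℕ) (f : Yc k A M N n p) (X : (Pk k A (n+1) : Type)) (m : M) :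
    faceMid k A n p i f (X ⊗ₜ m) = f (mulP k A n i X ⊗ₜ m) := rfl

/-- `faceLastYD` with `Δ(a^{n+1})` replaced by an arbitrary element of `A ⊗ A`, so that
identities can be checked on pure tensors `u₁ ⊗ u₂`. -/
def faceLastYDOn (ωM : A ⊗[k] M →ₗ[k] M) (n p : ℕ) (f : Yc k A M N n p) :
    ((Pk k A n : Type) ⊗[k] (A ⊗[k] A)) ⊗[k] M →ₗ[k] Cd k A N p :=
  (rdiagE k A p).comp <|
    ((TensorProduct.comm k A (Cd k A N p)).toLinearMap).comp <|
      (TensorProduct.map (LinearMap.id : A →ₗ[k] A)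
        (f.comp (TensorProduct.map (LinearMap.id : (Pk k A n : Type) →ₗ[k] _) ωM))).comp <|
        ((TensorProduct.leftComm k (Pk k A n : Type) A (A ⊗[k] M)).toLinearMap).comp <|
          (TensorProduct.map (LinearMap.id : (Pk k A n : Type) →ₗ[k] _)
            (TensorProduct.assoc k A A M).toLinearMap).comp
            (TensorProduct.assoc k (Pk k A n : Type) (A ⊗[k] A) M).toLinearMap

lemma faceLastYDOn_tmul (ωM : A ⊗[k] M →ₗ[k] M) (n p : ℕ) (f : Yc k A M N n p)
    (x : (Pk k A n : Type)) (u₁ u₂ : A) (m : M) :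
    faceLastYDOn k A ωM n p f ((x ⊗ₜ (u₁ ⊗ₜ u₂)) ⊗ₜ m) =
      rdiagE k A p (f (x ⊗ₜ ωM (u₂ ⊗ₜ m)) ⊗ₜ u₁) := by
  simp [faceLastYDOn]

lemma faceLastYD_tmul (ωM : A ⊗[k] M →ₗ[k] M) (n p : ℕ) (f : Yc k A M N n p)
    (x : (Pk k A n : Type)) (a : A) (m : M) :
    faceLastYD k A ωM n p f ((x ⊗ₜ a) ⊗ₜ m) =
      faceLastYDOn k A ωM n p f ((x ⊗ₜ ΔA k A a) ⊗ₜ m) :=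
  rfl

variable (ωM : A ⊗[k] M →ₗ[k] M) (ωN : A ⊗[k] N →ₗ[k] N) (n p : ℕ) (f : Yc k A M N n p)

lemma face0_face0 (hN : ∀ (a b : A) (x : N), ωN (a ⊗ₜ ωN (b ⊗ₜ x)) = ωN ((a * b) ⊗ₜ x)) :
    face0 k A ωN (n+1) p (face0 k A ωN n p f) =
      faceMid k A (n+1) p 1 (face0 k A ωN n p f) := by
  refine ext_insP k A fun a X m => ?_
  obtain ⟨w, rfl⟩ := (insP k A n).surjective X
  induction w using TensorProduct.induction_on with
  | zero => simp
  | add w₁ w₂ h₁ h₂ => simp only [map_add, tmul_add, add_tmul, h₁, h₂]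
  | tmul b x =>
    rw [face0_insP_tmul, face0_insP_tmul, faceMid_tmul, mulP_one_insP_insP, face0_insP_tmul,
      ldiag_assoc k A hN]

lemma face0_faceMid (i : ℕ) (h1 : 1 ≤ i) (h2 : i ≤ n) :
    face0 k A ωN (n+1) p (faceMid k A n p i f) =
      faceMid k A (n+1) p (i+1) (face0 k A ωN n p f) := by
  refine ext_insP k A fun a X m => ?_
  rw [face0_insP_tmul, faceMid_tmul, faceMid_tmul, mulP_succ_insP k A n i h1 h2,
    face0_insP_tmul]

lemma face0_faceLastYD :
    face0 k A ωN (n+1) p (faceLastYD k A ωM n p f) =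
      faceLastYD k A ωM (n+1) p (face0 k A ωN n p f) := by
  refine ext_insP k A fun a X m => ?_
  induction X using pwr_induction_on with
  | zero => simp
  | add X₁ X₂ h₁ h₂ => simp only [map_add, tmul_add, add_tmul, h₁, h₂]
  | tmul x b =>
    rw [face0_insP_tmul k A ωN (n+1) p _ a (x ⊗ₜ b) m, faceLastYD_tmul, insP_succ_tmul,
      faceLastYD_tmul]
    induction ΔA k A b using TensorProduct.induction_on with
    | zero => simp
    | add u₁ u₂ h₁ h₂ => simp only [map_add, tmul_add, add_tmul, h₁, h₂]
    | tmul u₁ u₂ =>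
      rw [faceLastYDOn_tmul, faceLastYDOn_tmul, face0_insP_tmul, rdiagE_ldiag]

lemma faceMid_faceMid (i j : ℕ) (h1 : 1 ≤ i) (h2 : i ≤ j) (h3 : j ≤ n) :
    faceMid k A (n+1) p i (faceMid k A n p j f) =
      faceMid k A (n+1) p (j+1) (faceMid k A n p i f) :=
  TensorProduct.ext' fun X m => by
    rw [faceMid_tmul, faceMid_tmul, faceMid_tmul, faceMid_tmul, mulP_mulP k A n i j h1 h2 h3]

lemma faceMid_faceLastYD (i : ℕ) (hi : i ≤ n) :
    faceMid k A (n+1) p i (faceLastYD k A ωM n p f) =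
      faceLastYD k A ωM (n+1) p (faceMid k A n p i f) := by
  refine TensorProduct.ext' fun X m => ?_
  induction X using pwr_induction_on with
  | zero => simp
  | add X₁ X₂ h₁ h₂ => simp only [map_add, add_tmul, h₁, h₂]
  | tmul Y b =>
    rw [faceMid_tmul k A (n+1) p i _ (Y ⊗ₜ b) m, mulP_tmul_of_ne k A n i (by omega),
      faceLastYD_tmul, faceLastYD_tmul]
    induction ΔA k A b using TensorProduct.induction_on with
    | zero => simp
    | add u₁ u₂ h₁ h₂ => simp only [map_add, tmul_add, add_tmul, h₁, h₂]
    | tmul u₁ u₂ => rw [faceLastYDOn_tmul, faceLastYDOn_tmul, faceMid_tmul]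

lemma rdiagE_faceLastYDOn
    (hM : ∀ (a b : A) (m : M), ωM (a ⊗ₜ ωM (b ⊗ₜ m)) = ωM ((a * b) ⊗ₜ m))
    (x : (Pk k A n : Type)) (u : A ⊗[k] A) (v₁ v₂ : A) (m : M) :
    rdiagE k A p (faceLastYDOn k A ωM n p f ((x ⊗ₜ u) ⊗ₜ ωM (v₂ ⊗ₜ m)) ⊗ₜ v₁) =
      faceLastYDOn k A ωM n p f ((x ⊗ₜ (u * (v₁ ⊗ₜ v₂))) ⊗ₜ m) := by
  induction u using TensorProduct.induction_on with
  | zero => simp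
  | add u₁ u₂ h₁ h₂ => simp only [map_add, tmul_add, add_tmul, add_mul, h₁, h₂]
  | tmul u₁ u₂ =>
    rw [faceLastYDOn_tmul, rdiagE_assoc, Algebra.TensorProduct.tmul_mul_tmul, faceLastYDOn_tmul,
      hM]

lemma faceMid_top_faceLastYD
    (hM : ∀ (a b : A) (m : M), ωM (a ⊗ₜ ωM (b ⊗ₜ m)) = ωM ((a * b) ⊗ₜ m)) :
    faceMid k A (n+1) p (n+1) (faceLastYD k A ωM n p f) =
      faceLastYD k A ωM (n+1) p (faceLastYD k A ωM n p f) := by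
  refine TensorProduct.ext' fun X m => ?_
  induction X using pwr_induction_on₂ with
  | zero => simp
  | add X₁ X₂ h₁ h₂ => simp only [map_add, add_tmul, h₁, h₂]
  | tmul x a b =>
    -- `X` stays abstract during the induction: the tensor lemmas do not rewrite under
    -- `x ⊗ₜ a` once it is read as an element of `Pk (n+1)`
    have key : ∀ X : (Pk k A (n+1) : Type), X = x ⊗ₜ a → ∀ v : A ⊗[k] A,
        faceLastYDOn k A ωM (n+1) p (faceLastYD k A ωM n p f) ((X ⊗ₜ v) ⊗ₜ m) =
          faceLastYDOn k A ωM n p f ((x ⊗ₜ (ΔA k A a * v)) ⊗ₜ m) := by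
      intro X hX v
      induction v using TensorProduct.induction_on with
      | zero => simp
      | add v₁ v₂ h₁ h₂ => simp only [map_add, tmul_add, add_tmul, mul_add, h₁, h₂]
      | tmul v₁ v₂ =>
        rw [faceLastYDOn_tmul, hX]
        exact rdiagE_faceLastYDOn k A ωM n p f hM x (ΔA k A a) v₁ v₂ m
    have hmul : faceMid k A (n+1) p (n+1) (faceLastYD k A ωM n p f) (((x ⊗ₜ a) ⊗ₜ b) ⊗ₜ m) =
        faceLastYDOn k A ωM n p f ((x ⊗ₜ ΔA k A (a * b)) ⊗ₜ m) := by
      erw [faceMid_tmul, mulP_last_tmul]; rfl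
    rw [hmul, Bialgebra.comul_mul]
    exact (key _ rfl _).symm

end Faces

section Differential

variable {M N : Type} [AddCommGroup M] [Module k M] [AddCommGroup N] [Module k N]
  (ωM : A ⊗[k] M →ₗ[k] M) (ωN : A ⊗[k] N →ₗ[k] N) (n p : ℕ)

lemma bYD_zero (f : Yc k A M N n p) : bYD k A ωM ωN n p 0 f = face0 k A ωN n p f := by
  simp [bYD]

lemma bYD_of_le (i : ℕ) (h1 : 1 ≤ i) (h2 : i ≤ n) (f : Yc k A M N n p) :
    bYD k A ωM ωN n p i f = faceMid k A n p i f := by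
  simp [bYD, h2, Nat.one_le_iff_ne_zero.mp h1]

lemma bYD_last (f : Yc k A M N n p) : bYD k A ωM ωN n p (n+1) f = faceLastYD k A ωM n p f := by
  simp [bYD]

lemma bYD_add (i : ℕ) (f g : Yc k A M N n p) :
    bYD k A ωM ωN n p i (f + g) = bYD k A ωM ωN n p i f + bYD k A ωM ωN n p i g := by
  unfold bYD face0 faceMid faceLastYD
  split_ifs <;> simp only [TensorProduct.map_add_right, LinearMap.comp_add, LinearMap.add_comp]

lemma bYD_bYD (hM : ∀ (a b : A) (m : M), ωM (a ⊗ₜ ωM (b ⊗ₜ m)) = ωM ((a * b) ⊗ₜ m))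
    (hN : ∀ (a b : A) (x : N), ωN (a ⊗ₜ ωN (b ⊗ₜ x)) = ωN ((a * b) ⊗ₜ x))
    (i j : ℕ) (hij : i ≤ j) (hj : j ≤ n + 1) (f : Yc k A M N n p) :
    bYD k A ωM ωN (n+1) p i (bYD k A ωM ωN n p j f) =
      bYD k A ωM ωN (n+1) p (j+1) (bYD k A ωM ωN n p i f) := by
  rcases Nat.eq_zero_or_pos i with rfl | hi
  · rcases Nat.eq_zero_or_pos j with rfl | hj0
    · rw [bYD_zero, bYD_zero, bYD_of_le k A ωM ωN (n+1) p 1 le_rfl (by omega)]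
      exact face0_face0 k A ωN n p f hN
    rcases Nat.lt_or_ge j (n+1) with hjn | hjn
    · rw [bYD_of_le k A ωM ωN n p j hj0 (by omega), bYD_zero, bYD_zero,
        bYD_of_le k A ωM ωN (n+1) p (j+1) (by omega) (by omega)]
      exact face0_faceMid k A ωN n p f j hj0 (by omega)
    obtain rfl : j = n + 1 := by omega
    rw [bYD_last, bYD_zero, bYD_zero, bYD_last]
    exact face0_faceLastYD k A ωM ωN n p f
  rcases Nat.lt_or_ge j (n+1) with hjn | hjn
  · rw [bYD_of_le k A ωM ωN n p j (by omega) (by omega),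
      bYD_of_le k A ωM ωN (n+1) p i hi (by omega), bYD_of_le k A ωM ωN n p i hi (by omega),
      bYD_of_le k A ωM ωN (n+1) p (j+1) (by omega) (by omega)]
    exact faceMid_faceMid k A n p f i j hi hij (by omega)
  obtain rfl : j = n + 1 := by omega
  rw [bYD_last, bYD_last]
  rcases Nat.lt_or_ge i (n+1) with hin | hin
  · rw [bYD_of_le k A ωM ωN (n+1) p i hi (by omega), bYD_of_le k A ωM ωN n p i hi (by omega)]
    exact faceMid_faceLastYD k A ωM n p f i (by omega)
  obtain rfl : i = n + 1 := by omega
  rw [bYD_of_le k A ωM ωN (n+1) p (n+1) hi le_rfl, bYD_last]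
  exact faceMid_top_faceLastYD k A ωM n p f hM

end Differential

/-- The horizontal differential `d_m = Σ (-1)^i b_i` of the
Yetter-Drinfel'd bicomplex squares to zero. -/
theorem dmYD_dmYD (k : Type) [Field k] (A : Type) [Ring A] [Bialgebra k A]
    (M N : Type) [AddCommGroup M] [Module k M] [AddCommGroup N] [Module k N]
    (ωM : A ⊗[k] M →ₗ[k] M) (ρM : M →ₗ[k] M ⊗[k] A)
    (ωN : A ⊗[k] N →ₗ[k] N) (ρN : N →ₗ[k] N ⊗[k] A)
    (hM : IsYetterDrinfeld k A ωM ρM) (hN : IsYetterDrinfeld k A ωN ρN)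
    (n p : ℕ) (f : Yc k A M N n p) :
    dmYD k A ωM ωN (n+1) p (dmYD k A ωM ωN n p f) = 0 :=
  sum_alternating_comp_eq_zero n (bYD k A ωM ωN n p)
    (fun i => AddMonoidHom.mk' (bYD k A ωM ωN (n+1) p i) (bYD_add k A ωM ωN (n+1) p i))
    (fun i j hij hj => bYD_bYD k A ωM ωN n p hM.1.2 hN.1.2 i j hij hj) f

end PS
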